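/- arXiv:2012.14701 — 6 statements merged into one kernel-verified Lean document; each statement's English description precedes it below -/
import Mathlib

section
/- Corridor Lemma: For infinite binary words x and y, y belongs to the abelian closure of x if and only if for all n ∈ ℕ: inf over length-n factors u of y of |u|_1 is at least inf over length-n factors of x of |u|_1, and sup over length-n factors of y of |u|_1 is at most sup over length-n factors of x of |u|_1. -/
/-- `u` is a factor of the infinite word `x`. -/
def Factor {A : Type*} (x : ℕ → A) (u : List A) : Prop :=
  ∃ i, u = (List.range u.length).map fun k => x (i + k)

/-- Abelian equivalence of finite words. -/
def AbEq {A : Type*} [DecidableEq A] (u v : List A) : Prop :=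
  ∀ a, u.count a = v.count a

/-- `y` is in the abelian closure of `x`. -/
def InAbClosure {A : Type*} [DecidableEq A] (x y : ℕ → A) : Prop :=
  ∀ u, Factor y u → ∃ v, Factor x v ∧ AbEq u v

/-! A factor of length `n` of a binary word is determined, up to abelian equivalence, by its
number of ones (its weight), so `y ∈ A(x)` says exactly that for every `n` the weights of the
length-`n` factors of `y` form a subset of those of `x`. Sliding a window one step changes its
weight by at most one, so by a discrete intermediate value argument the weights of the length-`n`
factors of `x` fill the whole interval between their minimum and maximum; and a set is contained in
an interval iff its infimum and supremum are. -/

theorem exists_apply_eq_of_apply_succ_le_add_one {f : ℕ → ℕ} (hf : ∀ m, f (m + 1) ≤ f m + 1)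
    {a b k : ℕ} (hab : a ≤ b) (ha : f a ≤ k) (hb : k ≤ f b) : ∃ m, f m = k := by
  induction b, hab using Nat.le_induction with
  | base => exact ⟨a, le_antisymm ha hb⟩
  | succ b _ ih =>
    by_cases hk : k ≤ f b
    · exact ih hk
    · exact ⟨b + 1, by have := hf b; omega⟩

theorem exists_apply_eq_of_apply_le_apply_succ_add_one {f : ℕ → ℕ}
    (hf : ∀ m, f m ≤ f (m + 1) + 1) {a b k : ℕ} (hba : b ≤ a) (ha : f a ≤ k) (hb : k ≤ f b) :
    ∃ m, f m = k := by
  induction a, hba using Nat.le_induction with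
  | base => exact ⟨b, le_antisymm ha hb⟩
  | succ a _ ih =>
    by_cases hk : f a ≤ k
    · exact ih hk
    · exact ⟨a + 1, by have := hf a; omega⟩

theorem ordConnected_range_of_step_le_one {f : ℕ → ℕ} (hup : ∀ m, f (m + 1) ≤ f m + 1)
    (hdown : ∀ m, f m ≤ f (m + 1) + 1) : (Set.range f).OrdConnected := by
  refine ⟨?_⟩
  rintro _ ⟨a, rfl⟩ _ ⟨b, rfl⟩ k ⟨ha, hb⟩
  rcases le_total a b with hab | hba
  · exact exists_apply_eq_of_apply_succ_le_add_one hup hab ha hb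
  · exact exists_apply_eq_of_apply_le_apply_succ_add_one hdown hba ha hb

theorem Nat.subset_iff_sInf_le_sInf_and_sSup_le_sSup {S T : Set ℕ} (hS : S.Nonempty)
    (hSb : BddAbove S) (hT : T.Nonempty) (hTb : BddAbove T) (hTc : T.OrdConnected) :
    S ⊆ T ↔ sInf T ≤ sInf S ∧ sSup S ≤ sSup T := by
  refine ⟨fun h => ⟨csInf_le_csInf (OrderBot.bddBelow T) hS h, csSup_le_csSup hTb hS h⟩, ?_⟩
  rintro ⟨hinf, hsup⟩ s hs
  exact hTc.out (Nat.sInf_mem hT) (Nat.sSup_mem hT hTb)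
    ⟨hinf.trans (Nat.sInf_le hs), (le_csSup hSb hs).trans hsup⟩

section Window

variable {A : Type*} (x : ℕ → A)

def window (i n : ℕ) : List A :=
  (List.range n).map fun k => x (i + k)

@[simp]
theorem length_window (i n : ℕ) : (window x i n).length = n := by
  simp [window]

theorem factor_and_length_eq_iff {u : List A} {n : ℕ} :
    Factor x u ∧ u.length = n ↔ ∃ i, window x i n = u := by
  constructor
  · rintro ⟨⟨i, hu⟩, rfl⟩
    exact ⟨i, hu.symm⟩
  · rintro ⟨i, rfl⟩
    exact ⟨⟨i, by rw [length_window]; rfl⟩, length_window x i n⟩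

theorem window_succ (i n : ℕ) : window x i (n + 1) = window x i n ++ [x (i + n)] := by
  simp [window, List.range_succ]

theorem window_succ' (i n : ℕ) : window x i (n + 1) = x i :: window x (i + 1) n := by
  simp only [window, List.range_succ_eq_map, List.map_cons, List.map_map, Nat.add_zero,
    Function.comp_def, Nat.succ_eq_add_one, Nat.add_right_comm i 1, Nat.add_assoc]

variable [DecidableEq A]

theorem count_window_succ_le (a : A) (i n : ℕ) :
    (window x (i + 1) n).count a ≤ (window x i n).count a + 1 :=
  calc (window x (i + 1) n).count a
      ≤ (x i :: window x (i + 1) n).count a := List.count_le_count_cons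
    _ = (window x i n).count a + [x (i + n)].count a := by
      rw [← window_succ', window_succ, List.count_append]
    _ ≤ (window x i n).count a + 1 := by
      gcongr
      simpa using List.count_le_length (a := a) (l := [x (i + n)])

theorem count_window_le_succ (a : A) (i n : ℕ) :
    (window x i n).count a ≤ (window x (i + 1) n).count a + 1 :=
  calc (window x i n).count a
      ≤ (window x i n ++ [x (i + n)]).count a := List.Sublist.count_le a (by simp)
    _ = (window x (i + 1) n).count a + [x i].count a := by
      rw [← window_succ, window_succ', List.count_cons, List.count_singleton]
    _ ≤ (window x (i + 1) n).count a + 1 := by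
      gcongr
      simpa using List.count_le_length (a := a) (l := [x i])

theorem setOf_factor_count_eq_range (a : A) (n : ℕ) :
    {k | ∃ u, Factor x u ∧ u.length = n ∧ u.count a = k} =
      Set.range fun i => (window x i n).count a := by
  ext k
  simp only [Set.mem_ofPred_eq, Set.mem_range, ← and_assoc, factor_and_length_eq_iff]
  constructor
  · rintro ⟨u, ⟨i, rfl⟩, rfl⟩
    exact ⟨i, rfl⟩
  · rintro ⟨i, rfl⟩
    exact ⟨_, ⟨i, rfl⟩, rfl⟩

theorem bddAbove_range_count_window (a : A) (n : ℕ) :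
    BddAbove (Set.range fun i => (window x i n).count a) :=
  ⟨n, by rintro _ ⟨i, rfl⟩; simpa using List.count_le_length (a := a) (l := window x i n)⟩

theorem ordConnected_range_count_window (a : A) (n : ℕ) :
    (Set.range fun i => (window x i n).count a).OrdConnected :=
  ordConnected_range_of_step_le_one (count_window_succ_le x a · n) (count_window_le_succ x a · n)

end Window

theorem count_zero_add_count_one (l : List (Fin 2)) : l.count 0 + l.count 1 = l.length := by
  induction l with
  | nil => rfl
  | cons a l ih =>
    fin_cases a <;> simp <;> omega

theorem abEq_iff_length_eq_and_count_one_eq {u v : List (Fin 2)} :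
    AbEq u v ↔ u.length = v.length ∧ u.count 1 = v.count 1 := by
  have hu := count_zero_add_count_one u
  have hv := count_zero_add_count_one v
  constructor
  · intro h
    have h0 := h 0
    have h1 := h 1
    exact ⟨by omega, h1⟩
  · rintro ⟨hlen, h1⟩ a
    fin_cases a
    · show u.count 0 = v.count 0
      omega
    · exact h1

theorem inAbClosure_iff_range_count_one_subset (x y : ℕ → Fin 2) :
    InAbClosure x y ↔ ∀ n, (Set.range fun i => (window y i n).count 1) ⊆
      Set.range fun i => (window x i n).count 1 := by
  constructor
  · rintro h n _ ⟨i, rfl⟩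
    obtain ⟨v, hv, hab⟩ := h (window y i n) ((factor_and_length_eq_iff y).2 ⟨i, rfl⟩).1
    obtain ⟨hlen, hcount⟩ := abEq_iff_length_eq_and_count_one_eq.1 hab
    obtain ⟨j, rfl⟩ := (factor_and_length_eq_iff x).1 ⟨hv, hlen.symm.trans (length_window y i n)⟩
    exact ⟨j, hcount.symm⟩
  · intro h u hu
    obtain ⟨i, hi⟩ := (factor_and_length_eq_iff y).1 ⟨hu, rfl⟩
    obtain ⟨j, hj⟩ := h u.length ⟨i, rfl⟩
    refine ⟨window x j u.length, ((factor_and_length_eq_iff x).2 ⟨j, rfl⟩).1, ?_⟩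
    exact abEq_iff_length_eq_and_count_one_eq.2
      ⟨(length_window x j _).symm, (congrArg (List.count 1) hi).symm.trans hj.symm⟩

theorem corridor_lemma (x y : ℕ → Fin 2) :
    InAbClosure x y ↔
      ∀ n : ℕ,
        sInf {k | ∃ u, Factor x u ∧ u.length = n ∧ u.count 1 = k} ≤
          sInf {k | ∃ u, Factor y u ∧ u.length = n ∧ u.count 1 = k} ∧
        sSup {k | ∃ u, Factor y u ∧ u.length = n ∧ u.count 1 = k} ≤
          sSup {k | ∃ u, Factor x u ∧ u.length = n ∧ u.count 1 = k} := by
  simp only [setOf_factor_count_eq_range, inAbClosure_iff_range_count_one_subset]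
  exact forall_congr' fun n =>
    Nat.subset_iff_sInf_le_sInf_and_sSup_le_sSup (Set.range_nonempty _)
      (bddAbove_range_count_window y 1 n) (Set.range_nonempty _)
      (bddAbove_range_count_window x 1 n) (ordConnected_range_count_window x 1 n)
end

section
/- If an infinite word x has uniform frequency α of a letter a, then every word y in the abelian closure of x also has uniform frequency of a, and this frequency equals α. -/
open Filter

/-- The maximal number of occurrences of `a` in a length-`n` factor of `x`. -/
noncomputable def supCount {A : Type*} [DecidableEq A] (x : ℕ → A) (a : A) (n : ℕ) : ℕ :=
  sSup {k | ∃ u, Factor x u ∧ u.length = n ∧ u.count a = k}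

/-- The minimal number of occurrences of `a` in a length-`n` factor of `x`. -/
noncomputable def infCount {A : Type*} [DecidableEq A] (x : ℕ → A) (a : A) (n : ℕ) : ℕ :=
  sInf {k | ∃ u, Factor x u ∧ u.length = n ∧ u.count a = k}

/-! Every length-`n` factor of `y ∈ A(x)` is abelian equivalent to a length-`n` factor of `x`,
so it contains between `infCount x a n` and `supCount x a n` letters `a`. Divided by `n`, both
bounds tend to `α`, and the squeeze theorem concludes. -/

section

variable {A : Type*} [DecidableEq A]

def factorCounts (x : ℕ → A) (a : A) (n : ℕ) : Set ℕ :=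
  {k | ∃ u, Factor x u ∧ u.length = n ∧ u.count a = k}

lemma factorCounts_nonempty (x : ℕ → A) (a : A) (n : ℕ) : (factorCounts x a n).Nonempty :=
  ⟨_, (List.range n).map (fun k => x (0 + k)), ⟨0, by simp⟩, by simp, rfl⟩

lemma factorCounts_bddAbove (x : ℕ → A) (a : A) (n : ℕ) : BddAbove (factorCounts x a n) := by
  refine ⟨n, ?_⟩
  rintro _ ⟨u, -, rfl, rfl⟩
  exact List.count_le_length

lemma InAbClosure.factorCounts_subset {x y : ℕ → A} (h : InAbClosure x y) (a : A) (n : ℕ) :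
    factorCounts y a n ⊆ factorCounts x a n := by
  rintro _ ⟨u, hu, rfl, rfl⟩
  obtain ⟨v, hv, huv⟩ := h u hu
  exact ⟨v, hv, (List.perm_iff_count.2 huv).length_eq.symm, (huv a).symm⟩

lemma InAbClosure.supCount_le {x y : ℕ → A} (h : InAbClosure x y) (a : A) (n : ℕ) :
    supCount y a n ≤ supCount x a n :=
  csSup_le_csSup (factorCounts_bddAbove x a n) (factorCounts_nonempty y a n)
    (h.factorCounts_subset a n)

lemma InAbClosure.infCount_le {x y : ℕ → A} (h : InAbClosure x y) (a : A) (n : ℕ) :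
    infCount x a n ≤ infCount y a n :=
  csInf_le_csInf (OrderBot.bddBelow _) (factorCounts_nonempty y a n) (h.factorCounts_subset a n)

lemma infCount_le_supCount (x : ℕ → A) (a : A) (n : ℕ) : infCount x a n ≤ supCount x a n :=
  csInf_le_csSup (factorCounts_nonempty x a n) (OrderBot.bddBelow _) (factorCounts_bddAbove x a n)

end

theorem uniform_frequency_abClosure {A : Type*} [DecidableEq A]
    (x : ℕ → A) (a : A) (α : ℝ)
    (hsup : Tendsto (fun n => (supCount x a n : ℝ) / n) atTop (nhds α))
    (hinf : Tendsto (fun n => (infCount x a n : ℝ) / n) atTop (nhds α)) :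
    ∀ y, InAbClosure x y →
      Tendsto (fun n => (supCount y a n : ℝ) / n) atTop (nhds α) ∧
      Tendsto (fun n => (infCount y a n : ℝ) / n) atTop (nhds α) := by
  intro y hy
  have div_le : ∀ {c d : ℕ → ℕ}, (∀ n, c n ≤ d n) → ∀ n, (c n : ℝ) / n ≤ d n / n :=
    fun h n => by gcongr; exact h n
  have xinf_le_ysup n := (hy.infCount_le a n).trans (infCount_le_supCount y a n)
  have yinf_le_xsup n := (infCount_le_supCount y a n).trans (hy.supCount_le a n)
  exact ⟨tendsto_of_tendsto_of_tendsto_of_le_of_le hinf hsup (div_le xinf_le_ysup)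
      (div_le (hy.supCount_le a)),
    tendsto_of_tendsto_of_tendsto_of_le_of_le hinf hsup (div_le (hy.infCount_le a))
      (div_le yinf_le_xsup)⟩
end

section
/- If an infinite word x has an irrational uniform frequency of some letter a, then every word in the abelian closure of x is aperiodic (not eventually periodic). -/
/-
A word `y` in the abelian closure of `x` has, in each of its factors, a count of `a` lying between
`infCount x a n` and `supCount x a n`, where `n` is the length of the factor. If `y` were eventually
periodic with preperiod `N`, period `p` and `c` letters `a` per period, its factor of length `m * p`
starting at `N` would contain exactly `m * c` letters `a`; dividing by `m * p` and letting `m → ∞`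
squeezes the frequency `α` to the rational `c / p`.
-/

open Filter

/-- An infinite word is eventually periodic. -/
def EventuallyPeriodic {A : Type*} (y : ℕ → A) : Prop :=
  ∃ N p : ℕ, 0 < p ∧ ∀ i, N ≤ i → y (i + p) = y i

theorem Function.Periodic.count_map_range_mul {A : Type*} [DecidableEq A] {f : ℕ → A} {p : ℕ}
    (hf : Function.Periodic f p) (a : A) (m : ℕ) :
    ((List.range (m * p)).map f).count a = m * ((List.range p).map f).count a := by
  induction m with
  | zero => simp
  | succ m ih =>
    have hshift : (fun j => f (m * p + j)) = f := by
      funext j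
      rw [add_comm]
      exact_mod_cast hf.nat_mul m j
    rw [add_one_mul, List.range_add, List.map_append, List.count_append, ih, List.map_map,
      Function.comp_def, hshift, add_one_mul]

theorem EventuallyPeriodic.exists_periodic_shift {A : Type*} {y : ℕ → A}
    (hy : EventuallyPeriodic y) : ∃ N p : ℕ, 0 < p ∧ Function.Periodic (fun k => y (N + k)) p :=
  let ⟨N, p, hp, hper⟩ := hy
  ⟨N, p, hp, fun k => by simpa only [add_assoc] using hper (N + k) (Nat.le_add_right N k)⟩

theorem factor_map_range {A : Type*} (y : ℕ → A) (i n : ℕ) :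
    Factor y ((List.range n).map fun k => y (i + k)) :=
  ⟨i, by rw [List.length_map, List.length_range]⟩

section Counts

variable {A : Type*} [DecidableEq A] {x : ℕ → A} {u : List A}

theorem Factor.infCount_le_count (hu : Factor x u) (a : A) : infCount x a u.length ≤ u.count a :=
  Nat.sInf_le ⟨u, hu, rfl, rfl⟩

theorem Factor.count_le_supCount (hu : Factor x u) (a : A) : u.count a ≤ supCount x a u.length := by
  refine le_csSup ⟨u.length, ?_⟩ ⟨u, hu, rfl, rfl⟩
  rintro k ⟨v, -, hv, rfl⟩
  exact hv ▸ List.count_le_length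

theorem InAbClosure.count_mem_Icc {y : ℕ → A} (hxy : InAbClosure x y) (hu : Factor y u) (a : A) :
    u.count a ∈ Set.Icc (infCount x a u.length) (supCount x a u.length) := by
  obtain ⟨v, hv, huv⟩ := hxy u hu
  have hlen : u.length = v.length := (List.perm_iff_count.mpr huv).length_eq
  rw [huv a, hlen]
  exact ⟨hv.infCount_le_count a, hv.count_le_supCount a⟩

end Counts

theorem eq_div_of_tendsto_of_le_mul {f g : ℕ → ℕ} {α : ℝ} {c p : ℕ} (hp : 0 < p)
    (hg : Tendsto (fun n => (g n : ℝ) / n) atTop (nhds α))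
    (hf : Tendsto (fun n => (f n : ℝ) / n) atTop (nhds α))
    (hle : ∀ m, m * c ∈ Set.Icc (g (m * p)) (f (m * p))) : α = c / p := by
  have hmp : Tendsto (fun m : ℕ => m * p) atTop atTop := tendsto_id.atTop_mul_const' hp
  have hsqueeze : Tendsto (fun m : ℕ => ((m * c : ℕ) : ℝ) / (m * p : ℕ)) atTop (nhds α) :=
    tendsto_of_tendsto_of_tendsto_of_le_of_le (hg.comp hmp) (hf.comp hmp)
      (fun m => by dsimp only [Function.comp_apply]; gcongr; exact (hle m).1)
      (fun m => by dsimp only [Function.comp_apply]; gcongr; exact (hle m).2)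
  have hconst : ∀ᶠ m : ℕ in atTop, c / p = ((m * c : ℕ) : ℝ) / (m * p : ℕ) := by
    filter_upwards [eventually_gt_atTop 0] with m hm
    push_cast
    exact (mul_div_mul_left _ _ (by positivity)).symm
  exact tendsto_nhds_unique hsqueeze (tendsto_const_nhds.congr' hconst)

theorem irrational_frequency_aperiodic {A : Type*} [DecidableEq A]
    (x : ℕ → A) (a : A) (α : ℝ) (hα : Irrational α)
    (hsup : Tendsto (fun n => (supCount x a n : ℝ) / n) atTop (nhds α))
    (hinf : Tendsto (fun n => (infCount x a n : ℝ) / n) atTop (nhds α)) :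
    ∀ y, InAbClosure x y → ¬ EventuallyPeriodic y := by
  intro y hxy hy
  obtain ⟨N, p, hp, hper⟩ := hy.exists_periodic_shift
  set c := ((List.range p).map fun k => y (N + k)).count a
  have hblock : ∀ m, m * c ∈ Set.Icc (infCount x a (m * p)) (supCount x a (m * p)) := by
    intro m
    have h := hxy.count_mem_Icc (factor_map_range y N (m * p)) a
    rwa [List.length_map, List.length_range, hper.count_map_range_mul] at h
  have hα_eq : α = c / p := eq_div_of_tendsto_of_le_mul hp hinf hsup hblock
  exact hα ⟨c / p, by push_cast; exact hα_eq.symm⟩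
end

section
/- An infinite word y is purely periodic if and only if there exists n ≥ 1 such that all factors of y of length n are abelian equivalent to each other. -/
/-- An infinite word is purely periodic with some period `p ≥ 1`. -/
def PurelyPeriodic {A : Type*} (y : ℕ → A) : Prop :=
  ∃ p : ℕ, 0 < p ∧ ∀ i, y (i + p) = y i

private lemma windowStep {A : Type*} [DecidableEq A] (y : ℕ → A) (m i : ℕ) (a : A) :
    (((List.range (m+1)).map fun k => y (i+1+k)).count a) + (if y i = a then 1 else 0)
      = (((List.range (m+1)).map fun k => y (i+k)).count a)
        + (if y (i + (m+1)) = a then 1 else 0) := by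
  have h1 : ((List.range (m+1)).map fun k => y (i+k))
      = y i :: ((List.range m).map fun k => y (i+1+k)) := by
    rw [List.range_succ_eq_map, List.map_cons, List.map_map]
    simp only [Nat.add_zero]
    congr 1
    exact List.map_congr_left fun k _ => by simp only [Function.comp]; congr 1; omega
  have h2 : ((List.range (m+1)).map fun k => y (i+1+k))
      = ((List.range m).map fun k => y (i+1+k)) ++ [y (i+1+m)] := by
    rw [List.range_succ, List.map_append]; rfl
  have h3 : i + 1 + m = i + (m+1) := by omega
  rw [h1, h2, List.count_append, List.count_cons, h3]
  simp only [List.count_cons, List.count_nil, beq_iff_eq]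
  split_ifs <;> simp_all <;> omega


theorem purelyPeriodic_iff_abEq_factors {A : Type*} [DecidableEq A] (y : ℕ → A) :
    PurelyPeriodic y ↔
      ∃ n : ℕ, 1 ≤ n ∧ ∀ u v, Factor y u → Factor y v →
        u.length = n → v.length = n → AbEq u v := by
  have aux : (∃ p : ℕ, 0 < p ∧ ∀ i, y (i + p) = y i) ↔
      ∃ n : ℕ, 1 ≤ n ∧ ∀ u v : List A,
        (∃ i, u = (List.range u.length).map fun k => y (i + k)) →
        (∃ i, v = (List.range v.length).map fun k => y (i + k)) →
        u.length = n → v.length = n → ∀ a, u.count a = v.count a := by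
    constructor
    · rintro ⟨p, hp, hper⟩
      obtain ⟨m, rfl⟩ : ∃ m, p = m + 1 := ⟨p - 1, by omega⟩
      refine ⟨m + 1, by omega, ?_⟩
      have key : ∀ i a, (((List.range (m+1)).map fun k => y (i+k)).count a)
          = (((List.range (m+1)).map fun k => y k).count a) := by
        intro i a
        induction i with
        | zero => simp
        | succ i ih =>
          have hs := windowStep y m i a
          rw [hper i] at hs
          have : ((List.range (m+1)).map fun k => y (i+1+k)).count a
              = ((List.range (m+1)).map fun k => y (i+k)).count a := by omega
          rw [this, ih]
      rintro u v ⟨i, hu⟩ ⟨j, hv⟩ hul hvl a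
      rw [hul] at hu
      rw [hvl] at hv
      rw [hu, hv, key i a, key j a]
    · rintro ⟨n, hn, hab⟩
      obtain ⟨m, rfl⟩ : ∃ m, n = m + 1 := ⟨n - 1, by omega⟩
      refine ⟨m + 1, by omega, fun i => ?_⟩
      have h1 : ∀ a, (((List.range (m+1)).map fun k => y (i+k)).count a)
          = (((List.range (m+1)).map fun k => y (i+1+k)).count a) := by
        intro a
        apply hab
        · exact ⟨i, by simp⟩
        · exact ⟨i + 1, by simp⟩
        · simp
        · simp
      have hs := windowStep y m i (y i)
      rw [h1 (y i)] at hs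
      by_contra h
      simp [h] at hs
  simpa [PurelyPeriodic, Factor, AbEq] using aux
end

section
/- For any purely periodic infinite word x, the abelian closure of x is finite. More precisely, if n is the least integer such that all length-n factors of x are abelian equivalent, then every y in the abelian closure of x is purely periodic of the form v^ω with |v| dividing n. -/
lemma abEq_length {A : Type*} [DecidableEq A] {u v : List A} (h : AbEq u v) :
    u.length = v.length := by
  have hm : (u : Multiset A) = (v : Multiset A) := by
    ext a
    simpa using h a
  simpa using congrArg Multiset.card hm

lemma period_of_abeq_shift {A : Type*} [DecidableEq A] (y : ℕ → A) (n : ℕ) (hn1 : 1 ≤ n)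
    (h : ∀ i, AbEq ((List.range n).map fun k => y (i + k))
               ((List.range n).map fun k => y (i + 1 + k))) :
    ∀ i, y (i + n) = y i := by
  obtain ⟨m, rfl⟩ := Nat.exists_eq_add_of_le' hn1
  intro i
  have e1 : (List.range (m + 1)).map (fun k => y (i + k))
      = y i :: (List.range m).map (fun k => y (i + 1 + k)) := by
    rw [List.range_succ_eq_map, List.map_cons, List.map_map]
    have : ((fun k => y (i + k)) ∘ Nat.succ) = fun k => y (i + 1 + k) := by
      funext k; simp only [Function.comp]; congr 1; omega
    simp [this]
  have e2 : (List.range (m + 1)).map (fun k => y (i + 1 + k))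
      = ((List.range m).map (fun k => y (i + 1 + k))) ++ [y (i + (m + 1))] := by
    rw [List.range_succ, List.map_append]
    congr 1
    simp; congr 1; omega
  have key := h i (y i)
  rw [e1, e2] at key
  by_cases hc : y (i + (m + 1)) = y i
  · exact hc
  · exfalso
    simp [List.count_cons, List.count_append, hc] at key

theorem abClosure_of_periodic_finite {A : Type*} [Fintype A] [DecidableEq A]
    (x : ℕ → A) (hx : PurelyPeriodic x) (n : ℕ) (hn1 : 1 ≤ n)
    (hn : ∀ u v, Factor x u → Factor x v → u.length = n → v.length = n → AbEq u v)
    (hmin : ∀ m, 1 ≤ m →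
      (∀ u v, Factor x u → Factor x v → u.length = m → v.length = m → AbEq u v) → n ≤ m) :
    {y : ℕ → A | InAbClosure x y}.Finite ∧
      ∀ y, InAbClosure x y → ∃ p : ℕ, 0 < p ∧ p ∣ n ∧ ∀ i, y (i + p) = y i := by
  have hper : ∀ y, InAbClosure x y → ∀ i, y (i + n) = y i := by
    intro y hy
    apply period_of_abeq_shift y n hn1
    intro i
    obtain ⟨u, hu, huv⟩ := hy ((List.range n).map fun k => y (i + k)) ⟨i, by simp⟩
    obtain ⟨u', hu', huv'⟩ := hy ((List.range n).map fun k => y (i + 1 + k)) ⟨i + 1, by simp⟩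
    have l1 : u.length = n := by
      have := abEq_length huv; simpa using this.symm
    have l2 : u'.length = n := by
      have := abEq_length huv'; simpa using this.symm
    intro a
    rw [huv a, huv' a]
    exact hn u u' hu hu' l1 l2 a
  have hmod : ∀ y, InAbClosure x y → ∀ i, y i = y (i % n) := by
    intro y hy i
    have hp := hper y hy
    conv_lhs => rw [← Nat.mod_add_div i n]
    generalize i / n = q
    induction q with
    | zero => simp
    | succ k ih =>
      have e : i % n + n * (k + 1) = (i % n + n * k) + n := by ring
      rw [e, hp]; exact ih
  constructor
  · have hsub : {y : ℕ → A | InAbClosure x y} ⊆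
        (fun c : Fin n → A => fun i : ℕ => c ⟨i % n, Nat.mod_lt i hn1⟩) '' Set.univ := by
      intro y hy
      refine ⟨fun j => y j, trivial, ?_⟩
      funext i
      exact (hmod y hy i).symm
    exact Set.Finite.subset (Set.finite_univ.image _) hsub
  · exact fun y hy => ⟨n, hn1, dvd_rfl, hper y hy⟩
end

section
/- Let x be an infinite word over Σ in which every letter occurs with bounded gaps, and let φ : Σ → Δ ∪ {ε} be a morphism mapping each letter to a word of length at most 1, such that φ(x) is infinite. Then for every y in the abelian closure of x, the word φ(y) is infinite and belongs to the abelian closure of φ(x). -/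
/-- The image of a finite word under a morphism `φ : A → List B`. -/
def wordMap {A B : Type*} (φ : A → List B) (u : List A) : List B :=
  (u.map φ).flatten

/-- The length-`m` prefix of the infinite word `x`. -/
def pref {A : Type*} (x : ℕ → A) (m : ℕ) : List A :=
  (List.range m).map x

/-- `z` is the (infinite) image of the infinite word `x` under the morphism `φ`:
every prefix of `z` is the image of some prefix of `x`. -/
def WordImage {A B : Type*} (φ : A → List B) (x : ℕ → A) (z : ℕ → B) : Prop :=
  ∀ n : ℕ, ∃ m : ℕ, wordMap φ (pref x m) = pref z n

/-! The image of every factor of `x` is a factor of `φ(x)`, and every factor of `φ(y)` is the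
image of a factor of `y`; since `φ` maps abelian equivalent words to abelian equivalent
words, the abelian-closure relation passes to images. The only real issue is that
`φ(y)` is infinite. A letter `a` of `x` with `φ a ≠ ε` occurs in `x` with some gap bound `N`,
and abelian equivalence transports this to every length-`N` factor of `y`; hence the images of
the prefixes of `y` grow without bound, and since they grow by at most one letter at a time
they form the prefixes of a single infinite word. -/

section

variable {A B : Type*}

@[simp]
theorem pref_length (z : ℕ → A) (m : ℕ) : (pref z m).length = m := by
  simp [pref]

theorem pref_add (z : ℕ → A) (i l : ℕ) :
    pref z (i + l) = pref z i ++ (List.range l).map (fun k => z (i + k)) := by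
  simp only [pref, List.range_add, List.map_append, List.map_map]
  rfl

theorem factor_iff_pref_append (z : ℕ → A) (u : List A) :
    Factor z u ↔ ∃ i, pref z (i + u.length) = pref z i ++ u := by
  simp only [Factor, pref_add, List.append_cancel_left_eq]
  exact exists_congr fun _ => eq_comm

theorem factor_nil (z : ℕ → A) : Factor z [] :=
  ⟨0, rfl⟩

theorem wordMap_append (φ : A → List B) (u v : List A) :
    wordMap φ (u ++ v) = wordMap φ u ++ wordMap φ v := by
  simp [wordMap]

theorem wordMap_pref_add (φ : A → List B) (y : ℕ → A) (m l : ℕ) :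
    wordMap φ (pref y (m + l)) =
      wordMap φ (pref y m) ++ wordMap φ ((List.range l).map fun k => y (m + k)) := by
  rw [pref_add, wordMap_append]

theorem wordMap_pref_prefix (φ : A → List B) (y : ℕ → A) {m m' : ℕ} (h : m ≤ m') :
    wordMap φ (pref y m) <+: wordMap φ (pref y m') := by
  obtain ⟨l, rfl⟩ := Nat.exists_eq_add_of_le h
  rw [wordMap_pref_add]
  exact List.prefix_append _ _

theorem length_wordMap_pref_succ_le (φ : A → List B) (hφ : ∀ a, (φ a).length ≤ 1)
    (y : ℕ → A) (m : ℕ) :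
    (wordMap φ (pref y (m + 1))).length ≤ (wordMap φ (pref y m)).length + 1 := by
  rw [wordMap_pref_add, List.length_append]
  simpa [wordMap] using hφ (y m)

theorem AbEq.wordMap [DecidableEq A] [DecidableEq B] (φ : A → List B) {u v : List A}
    (h : AbEq u v) : AbEq (wordMap φ u) (wordMap φ v) :=
  (((List.perm_iff_count.mpr h).map φ).flatten).count_eq

theorem Nat.exists_eq_of_le_succ_of_unbounded (L : ℕ → ℕ) (h0 : L 0 = 0)
    (hstep : ∀ m, L (m + 1) ≤ L m + 1) (hub : ∀ n, ∃ m, n ≤ L m) (n : ℕ) : ∃ m, L m = n := by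
  have hex : ∃ m, n ≤ L m := hub n
  cases hfind : Nat.find hex with
  | zero => exact ⟨0, by have := Nat.find_spec hex; rw [hfind] at this; omega⟩
  | succ k =>
    have hle : n ≤ L (k + 1) := hfind ▸ Nat.find_spec hex
    have hlt : ¬ n ≤ L k := Nat.find_min hex (by omega)
    exact ⟨k + 1, by have := hstep k; omega⟩

theorem InAbClosure.bounded_gaps [DecidableEq A] {x y : ℕ → A} (hy : InAbClosure x y) {a : A}
    {N : ℕ} (hx : ∀ i, ∃ j, i ≤ j ∧ j < i + N ∧ x j = a) (i : ℕ) :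
    ∃ j, i ≤ j ∧ j < i + N ∧ y j = a := by
  set w := (List.range N).map fun k => y (i + k)
  obtain ⟨v, ⟨p, hp⟩, hab⟩ := hy w ⟨i, by simp [w]⟩
  have hlen : v.length = N := by
    simpa [w] using ((List.perm_iff_count.mpr hab).length_eq).symm
  obtain ⟨q, hpq, hqN, hq⟩ := hx p
  have hav : a ∈ v := by
    rw [hp, hlen]
    exact List.mem_map.mpr
      ⟨q - p, List.mem_range.mpr (by omega), by rw [Nat.add_sub_cancel' hpq, hq]⟩
  have haw : a ∈ w := by
    rw [← List.count_pos_iff, hab, List.count_pos_iff]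
    exact hav
  obtain ⟨k, hk, rfl⟩ := List.mem_map.mp haw
  exact ⟨i + k, by omega, by have := List.mem_range.mp hk; omega, rfl⟩

theorem unbounded_length_wordMap_pref (φ : A → List B) {y : ℕ → A} {a : A} {N : ℕ}
    (hgaps : ∀ i, ∃ j, i ≤ j ∧ j < i + N ∧ y j = a) (ha : φ a ≠ []) (n : ℕ) :
    ∃ m, n ≤ (wordMap φ (pref y m)).length := by
  induction n with
  | zero => exact ⟨0, Nat.zero_le _⟩
  | succ n ih =>
    obtain ⟨m, hm⟩ := ih
    refine ⟨m + N, ?_⟩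
    obtain ⟨j, hmj, hjN, rfl⟩ := hgaps m
    have hmem : y j ∈ (List.range N).map fun k => y (m + k) :=
      List.mem_map.mpr ⟨j - m, List.mem_range.mpr (by omega), by rw [Nat.add_sub_cancel' hmj]⟩
    have hpos : 0 < (wordMap φ ((List.range N).map fun k => y (m + k))).length :=
      lt_of_lt_of_le (List.length_pos_iff.mpr ha)
        (List.sublist_flatten_of_mem (List.mem_map_of_mem hmem)).length_le
    rw [wordMap_pref_add, List.length_append]
    omega

theorem getElem_wordMap_pref (φ : A → List B) (y : ℕ → A) {m m' k : ℕ}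
    (h : k < (wordMap φ (pref y m)).length) (h' : k < (wordMap φ (pref y m')).length) :
    (wordMap φ (pref y m))[k] = (wordMap φ (pref y m'))[k] := by
  rcases le_total m m' with hmm | hmm
  · exact (wordMap_pref_prefix φ y hmm).getElem h
  · exact ((wordMap_pref_prefix φ y hmm).getElem h').symm

theorem exists_wordImage_of_unbounded (φ : A → List B) (hφ : ∀ a, (φ a).length ≤ 1)
    (y : ℕ → A) (hub : ∀ n, ∃ m, n ≤ (wordMap φ (pref y m)).length) :
    ∃ yz : ℕ → B, WordImage φ y yz := by
  choose g hg using Nat.exists_eq_of_le_succ_of_unbounded _ (by simp [pref, wordMap])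
    (length_wordMap_pref_succ_le φ hφ y) hub
  refine ⟨fun n => (wordMap φ (pref y (g (n + 1))))[n]'(by rw [hg]; omega),
    fun n => ⟨g n, List.ext_getElem (by simp [hg]) fun k hk _ => ?_⟩⟩
  simpa [pref] using getElem_wordMap_pref φ y hk (by rw [hg]; omega)

namespace WordImage

variable {φ : A → List B} {x : ℕ → A} {z : ℕ → B}

theorem exists_ne_nil (h : WordImage φ x z) : ∃ i, φ (x i) ≠ [] := by
  by_contra! hnil
  obtain ⟨m, hm⟩ := h 1
  have : wordMap φ (pref x m) = [] := by
    simpa [wordMap, pref, List.flatten_eq_nil_iff] using fun i _ => hnil i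
  simpa [this] using congrArg List.length hm

theorem wordMap_pref_eq (h : WordImage φ x z) (m : ℕ) :
    wordMap φ (pref x m) = pref z (wordMap φ (pref x m)).length := by
  obtain ⟨m', hm'⟩ := h (wordMap φ (pref x m)).length
  have hlen : (wordMap φ (pref x m')).length = (wordMap φ (pref x m)).length := by simp [hm']
  rcases le_total m m' with hmm | hmm
  · exact ((wordMap_pref_prefix φ x hmm).eq_of_length hlen.symm).trans hm'
  · exact ((wordMap_pref_prefix φ x hmm).eq_of_length hlen).symm.trans hm'

theorem factor_wordMap (h : WordImage φ x z) {v : List A} (hv : Factor x v) :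
    Factor z (wordMap φ v) := by
  obtain ⟨p, hp⟩ := (factor_iff_pref_append x v).mp hv
  have himg : wordMap φ (pref x (p + v.length)) = wordMap φ (pref x p) ++ wordMap φ v := by
    rw [hp, wordMap_append]
  refine (factor_iff_pref_append z _).mpr ⟨(wordMap φ (pref x p)).length, ?_⟩
  rw [← h.wordMap_pref_eq p, ← List.length_append, ← himg, ← h.wordMap_pref_eq]

theorem exists_factor_wordMap_eq (h : WordImage φ x z) {u : List B} (hu : Factor z u) :
    ∃ w, Factor x w ∧ wordMap φ w = u := by
  obtain rfl | hne := eq_or_ne u []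
  · exact ⟨[], factor_nil x, rfl⟩
  obtain ⟨i, hi⟩ := (factor_iff_pref_append z u).mp hu
  obtain ⟨m₁, hm₁⟩ := h i
  obtain ⟨m₂, hm₂⟩ := h (i + u.length)
  have hm : m₁ ≤ m₂ := by
    by_contra! hlt
    have := (wordMap_pref_prefix φ x hlt.le).length_le
    rw [hm₁, hm₂, pref_length, pref_length] at this
    exact hne (List.eq_nil_of_length_eq_zero (by omega))
  obtain ⟨l, rfl⟩ := Nat.exists_eq_add_of_le hm
  refine ⟨(List.range l).map fun k => x (m₁ + k), ⟨m₁, by simp⟩, ?_⟩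
  rw [wordMap_pref_add, hm₁, hi] at hm₂
  exact List.append_cancel_left hm₂

theorem inAbClosure [DecidableEq A] [DecidableEq B] {y : ℕ → A} {yz : ℕ → B}
    (hx : WordImage φ x z) (hy : WordImage φ y yz) (hxy : InAbClosure x y) :
    InAbClosure z yz := by
  intro u hu
  obtain ⟨w, hw, rfl⟩ := hy.exists_factor_wordMap_eq hu
  obtain ⟨v, hv, hab⟩ := hxy w hw
  exact ⟨wordMap φ v, hx.factor_wordMap hv, hab.wordMap φ⟩

end WordImage

end

theorem abClosure_morphism_image {A B : Type*} [DecidableEq A] [DecidableEq B]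
    (x : ℕ → A) (φ : A → List B)
    (hgaps : ∀ a : A, (∃ i, x i = a) → ∃ N, ∀ i, ∃ j, i ≤ j ∧ j < i + N ∧ x j = a)
    (hφ : ∀ a, (φ a).length ≤ 1)
    (xz : ℕ → B) (hxz : WordImage φ x xz) :
    ∀ y, InAbClosure x y →
      ∃ yz : ℕ → B, WordImage φ y yz ∧ InAbClosure xz yz := by
  intro y hy
  obtain ⟨j, hj⟩ := hxz.exists_ne_nil
  obtain ⟨N, hN⟩ := hgaps (x j) ⟨j, rfl⟩
  obtain ⟨yz, hyz⟩ := exists_wordImage_of_unbounded φ hφ y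
    (unbounded_length_wordMap_pref φ (hy.bounded_gaps hN) hj)
  exact ⟨yz, hyz, hxz.inAbClosure hyz hy⟩
end
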